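/- arXiv:2011.02349 — 3 statements merged into one kernel-verified Lean document; each statement's English description precedes it below -/
import Mathlib

section
/- In the epidemic setting with severity, let X : Ω → ℝ be any function, let t ∈ ℝ with Ω_t nonempty, and let x ∈ ℝ. Define X̌(ω) := X(σ(ω)) − τ^σ(ω) for ω ∈ Ω_{>0}. Then #Ω_t · P_t({ω ∈ Ω_t : X̌(ω) = x}) = Σ_{τ > 0} Σ_{g} Σ_{ω' ∈ Ω_{t−τ,g}, X(ω') = x + τ} n^τ(ω'); equivalently, P_t(X̌_t = x) = Σ_{τ > 0} Σ_g P_{t−τ,g}(X = x + τ)·E_{P_{t−τ,g}}(n^τ | X = x + τ)·(#Ω_{t−τ,g}/#Ω_t), where g ranges over the (finite) range of G, and terms with empty conditioning events are understood to vanish. -/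
open Finset
open scoped Classical ENNReal NNReal

noncomputable section

variable {Ω : Type*} [Fintype Ω]

/-- Number of elements of `Ω` satisfying `E`, as a real number. -/
def cnt (E : Ω → Prop) : ℝ := ((Finset.univ.filter E).card : ℝ)

/-- The uniform (counting) probability of the event `E`. -/
def pr (E : Ω → Prop) : ℝ := cnt E / (Fintype.card Ω : ℝ)

/-- The conditional probability of the event `E` given the event `C`
(junk value `0` if `C` is empty). -/
def prC (C E : Ω → Prop) : ℝ := cnt (fun ω => C ω ∧ E ω) / cnt C

/-- The expectation of `X` under the uniform probability measure. -/
def expec (X : Ω → ℝ) : ℝ := (∑ ω, X ω) / (Fintype.card Ω : ℝ)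

/-- The conditional expectation of `X` given the event `C`, i.e. the average of `X`
over `C` (junk value `0` if `C` is empty). -/
def expecC (C : Ω → Prop) (X : Ω → ℝ) : ℝ :=
  (∑ ω ∈ Finset.univ.filter C, X ω) / cnt C

end

noncomputable section

variable {Ω : Type*} [Fintype Ω]

/-- `ninf tI σ τ ω` is the number of people infected by `ω` exactly at `ω`'s infectious
age `τ`: the number of `ω' ∈ Ω_{>0}` with `σ ω' = ω` and generation time `τ^σ ω' = τ`. -/
def ninf (tI : Ω → ℝ) (σ : Ω → Ω) (τ : ℝ) (ω : Ω) : ℝ :=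
  cnt (fun ω' => 0 < tI ω' ∧ σ ω' = ω ∧ tI ω' - tI (σ ω') = τ)

/-- The (finitely many) positive times `τ` such that `Ω_{t-τ}` is nonempty. -/
def genTimes (tI : Ω → ℝ) (t : ℝ) : Finset ℝ :=
  (Finset.univ.image (fun ω' => t - tI ω')).filter (fun τ => 0 < τ)

end

/-!
Each individual `ω ∈ Ω_t` with `X̌(ω) = x` is counted exactly once on the right: split `Ω_t`
according to the generation time `τ = τ^σ(ω)`, which is positive because infectors are infected
earlier, and then according to the infector `ω' = σ(ω)`, which lies in `Ω_{t-τ}` and satisfies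
`X(ω') = x + τ`. The fibre over `(τ, ω')` is then exactly the set counted by `n^τ(ω')`. The second
form is the first one divided by `#Ω_t`, after regrouping each summand as a conditional
probability times a conditional expectation.
-/

noncomputable section

variable {Ω : Type*} [Fintype Ω]

lemma cnt_eq_zero_iff {E : Ω → Prop} : cnt E = 0 ↔ ∀ ω, ¬ E ω := by
  simp [cnt, filter_eq_empty_iff]

lemma cnt_mul_prC (C E : Ω → Prop) : cnt C * prC C E = cnt (fun ω => C ω ∧ E ω) := by
  rcases eq_or_ne (cnt C) 0 with hC | hC
  · have hCE : cnt (fun ω => C ω ∧ E ω) = 0 :=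
      cnt_eq_zero_iff.2 fun ω h => cnt_eq_zero_iff.1 hC ω h.1
    rw [hC, hCE, zero_mul]
  · exact mul_div_cancel₀ _ hC

-- `expecC` filters with the classical instance; `[DecidablePred C]` lets the right side match
-- filters elaborated with any other one (the final `congr` reconciles the two).
lemma prC_mul_expecC_mul_cnt_div {A B C : Ω → Prop} [DecidablePred C]
    (hC : ∀ ω, C ω ↔ A ω ∧ B ω) (f : Ω → ℝ) (c : ℝ) :
    prC A B * expecC C f * (cnt A / c) = (∑ ω ∈ univ.filter C, f ω) / c := by
  have hcntC : cnt C = cnt (fun ω => A ω ∧ B ω) := congrArg cnt (funext fun ω => propext (hC ω))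
  rcases eq_or_ne (cnt C) 0 with h0 | h0
  · have hempty : univ.filter C = ∅ := filter_eq_empty_iff.2 fun ω _ => cnt_eq_zero_iff.1 h0 ω
    simp [expecC, h0, hempty]
  · have hA : cnt A ≠ 0 := fun hA =>
      h0 (cnt_eq_zero_iff.2 fun ω hω => cnt_eq_zero_iff.1 hA ω ((hC ω).1 hω).1)
    rw [prC, expecC, ← hcntC]
    field_simp
    congr

lemma sum_image_sum_filter_and_eq {β : Type*} (G : Ω → β) (P Q : Ω → Prop) (f : Ω → ℝ) :
    ∑ g ∈ univ.image G, ∑ ω ∈ univ.filter (fun ω => P ω ∧ G ω = g ∧ Q ω), f ω =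
      ∑ ω ∈ univ.filter (fun ω => P ω ∧ Q ω), f ω := by
  rw [← sum_fiberwise_of_maps_to (g := G) (t := univ.image G)
    (fun ω _ => mem_image_of_mem G (mem_univ ω))]
  refine sum_congr rfl fun g _ => sum_congr ?_ fun _ _ => rfl
  ext ω
  simp only [mem_filter, mem_univ, true_and]
  tauto

variable (tI : Ω → ℝ) (σ : Ω → Ω) (X : Ω → ℝ) (t x : ℝ)

/-- The individuals `ω ∈ Ω_t ∩ Ω_{>0}` with `X̌(ω) = x`. -/
def checkedAt : Finset Ω :=
  univ.filter (fun ω => tI ω = t ∧ 0 < tI ω ∧ X (σ ω) - (tI ω - tI (σ ω)) = x)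

lemma ninf_eq_card_checkedAt {τ : ℝ} {ω' : Ω} (ht : tI ω' = t - τ) (hx : X ω' = x + τ) :
    ninf tI σ τ ω' =
      #{ω ∈ {ω ∈ checkedAt tI σ X t x | tI ω - tI (σ ω) = τ} | σ ω = ω'} := by
  rw [ninf, cnt, filter_filter]
  congr 2
  ext ω
  simp only [checkedAt, mem_filter, mem_univ, true_and]
  constructor
  · rintro ⟨hpos, rfl, hτ⟩
    exact ⟨⟨by linarith, hpos, by linarith⟩, hτ, rfl⟩
  · rintro ⟨⟨-, hpos, -⟩, hτ, hσω⟩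
    exact ⟨hpos, hσω, hτ⟩

lemma card_checkedAt_filter_genTime (τ : ℝ) :
    (#{ω ∈ checkedAt tI σ X t x | tI ω - tI (σ ω) = τ} : ℝ) =
      ∑ ω' ∈ univ.filter (fun ω' => tI ω' = t - τ ∧ X ω' = x + τ), ninf tI σ τ ω' := by
  have hmaps : Set.MapsTo σ ({ω ∈ checkedAt tI σ X t x | tI ω - tI (σ ω) = τ} : Finset Ω)
      (univ.filter (fun ω' => tI ω' = t - τ ∧ X ω' = x + τ)) := by
    intro ω hω
    simp only [checkedAt, coe_filter, mem_filter, mem_univ, true_and, Set.mem_ofPred_eq] at hω ⊢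
    obtain ⟨⟨rfl, -, hx⟩, hτ⟩ := hω
    constructor <;> linarith
  rw [card_eq_sum_card_fiberwise hmaps, Nat.cast_sum]
  refine sum_congr rfl fun ω' hω' => ?_
  simp only [mem_filter, mem_univ, true_and] at hω'
  rw [ninf_eq_card_checkedAt tI σ X t x hω'.1 hω'.2]

variable {tI σ} in
lemma cnt_checked_eq_sum_ninf (hσ : ∀ ω, 0 < tI ω → tI (σ ω) < tI ω) :
    cnt (fun ω => tI ω = t ∧ 0 < tI ω ∧ X (σ ω) - (tI ω - tI (σ ω)) = x) = ∑ τ ∈ genTimes tI t,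
      ∑ ω' ∈ univ.filter (fun ω' => tI ω' = t - τ ∧ X ω' = x + τ), ninf tI σ τ ω' := by
  have hmaps : Set.MapsTo (fun ω => tI ω - tI (σ ω)) (checkedAt tI σ X t x : Finset Ω)
      (genTimes tI t) := by
    intro ω hω
    simp only [checkedAt, coe_filter, mem_univ, true_and, Set.mem_ofPred_eq] at hω
    obtain ⟨rfl, hpos, -⟩ := hω
    simp only [genTimes, mem_coe, mem_filter, mem_image, mem_univ, true_and]
    exact ⟨⟨σ ω, rfl⟩, by linarith [hσ ω hpos]⟩
  have hcnt : cnt (fun ω => tI ω = t ∧ 0 < tI ω ∧ X (σ ω) - (tI ω - tI (σ ω)) = x) =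
      #(checkedAt tI σ X t x) := by
    rw [cnt, checkedAt]
    congr
  rw [hcnt, card_eq_sum_card_fiberwise hmaps, Nat.cast_sum]
  exact sum_congr rfl fun τ _ => card_checkedAt_filter_genTime tI σ X t x τ

end

theorem statement_6_general {Ω : Type*} [Fintype Ω] (tI : Ω → ℝ) (σ : Ω → Ω)
    (hσ : ∀ ω, 0 < tI ω → tI (σ ω) < tI ω)
    (G : Ω → ℝ) (X : Ω → ℝ) (t : ℝ)
    (x : ℝ) :
    cnt (fun ω => tI ω = t) *
        prC (fun ω => tI ω = t)
          (fun ω => 0 < tI ω ∧ X (σ ω) - (tI ω - tI (σ ω)) = x) =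
      ∑ τ ∈ genTimes tI t, ∑ g ∈ Finset.univ.image G,
        ∑ ω' ∈ Finset.univ.filter
            (fun ω' => tI ω' = t - τ ∧ G ω' = g ∧ X ω' = x + τ),
          ninf tI σ τ ω'
    ∧
    prC (fun ω => tI ω = t)
        (fun ω => 0 < tI ω ∧ X (σ ω) - (tI ω - tI (σ ω)) = x) =
      ∑ τ ∈ genTimes tI t, ∑ g ∈ Finset.univ.image G,
        prC (fun ω => tI ω = t - τ ∧ G ω = g) (fun ω => X ω = x + τ) *
          expecC (fun ω => tI ω = t - τ ∧ G ω = g ∧ X ω = x + τ) (ninf tI σ τ) *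
          (cnt (fun ω => tI ω = t - τ ∧ G ω = g) / cnt (fun ω => tI ω = t)) := by
  have hcount : cnt (fun ω => tI ω = t ∧ 0 < tI ω ∧ X (σ ω) - (tI ω - tI (σ ω)) = x) =
      ∑ τ ∈ genTimes tI t, ∑ g ∈ univ.image G,
        ∑ ω' ∈ univ.filter (fun ω' => tI ω' = t - τ ∧ G ω' = g ∧ X ω' = x + τ),
          ninf tI σ τ ω' := by
    simp only [sum_image_sum_filter_and_eq]
    exact cnt_checked_eq_sum_ninf X t x hσ
  refine ⟨(cnt_mul_prC _ _).trans hcount, ?_⟩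
  rw [prC, hcount, sum_div]
  refine sum_congr rfl fun τ _ => ?_
  rw [sum_div]
  refine sum_congr rfl fun g _ => ?_
  rw [prC_mul_expecC_mul_cnt_div fun ω => and_assoc.symm]

/-- Epidemic setting with severity `G : Ω → ℝ` (finite range,
`Ω_{t,g} = {ω ∈ Ω_t : G ω = g}`).  With `X̌(ω) := X(σ(ω)) − τ^σ(ω)` on `Ω_{>0}`:
`#Ω_t · P_t(X̌_t = x) = Σ_{τ>0} Σ_g Σ_{ω' ∈ Ω_{t−τ,g}, X ω' = x+τ} n^τ(ω')`, and
equivalently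
`P_t(X̌_t = x) = Σ_{τ>0} Σ_g P_{t−τ,g}(X = x+τ)·E_{P_{t−τ,g}}(n^τ | X = x+τ)·(#Ω_{t−τ,g}/#Ω_t)`,
`g` ranging over the (finite) range of `G`; terms with empty conditioning events vanish. -/
theorem statement_6 {Ω : Type*} [Fintype Ω] (tI : Ω → ℝ) (σ : Ω → Ω)
    (hσ : ∀ ω, 0 < tI ω → tI (σ ω) < tI ω)
    (G : Ω → ℝ) (X : Ω → ℝ) (t : ℝ)
    (hne : (Finset.univ.filter (fun ω => tI ω = t)).Nonempty) (x : ℝ) :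
    cnt (fun ω => tI ω = t) *
        prC (fun ω => tI ω = t)
          (fun ω => 0 < tI ω ∧ X (σ ω) - (tI ω - tI (σ ω)) = x) =
      ∑ τ ∈ genTimes tI t, ∑ g ∈ Finset.univ.image G,
        ∑ ω' ∈ Finset.univ.filter
            (fun ω' => tI ω' = t - τ ∧ G ω' = g ∧ X ω' = x + τ),
          ninf tI σ τ ω'
    ∧
    prC (fun ω => tI ω = t)
        (fun ω => 0 < tI ω ∧ X (σ ω) - (tI ω - tI (σ ω)) = x) =
      ∑ τ ∈ genTimes tI t, ∑ g ∈ Finset.univ.image G,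
        prC (fun ω => tI ω = t - τ ∧ G ω = g) (fun ω => X ω = x + τ) *
          expecC (fun ω => tI ω = t - τ ∧ G ω = g ∧ X ω = x + τ) (ninf tI σ τ) *
          (cnt (fun ω => tI ω = t - τ ∧ G ω = g) / cnt (fun ω => tI ω = t)) :=
  statement_6_general tI σ hσ G X t x
end

section
/- In the epidemic setting, for every t ∈ ℝ such that every individual infected at t has an infector (i.e. Ω_t ⊆ Ω_{>0}, in particular t > 0), one has #Ω_t = Σ_{τ > 0} Σ_{ω' ∈ Ω_{t−τ}} n^τ(ω'); equivalently, #Ω_t = Σ_{τ > 0} #Ω_{t−τ} · E_{P_{t−τ}}(n^τ_{t−τ}), where the sum runs over the finitely many τ > 0 with Ω_{t−τ} nonempty: the number of individuals infected at time t is determined by the numbers infected at earlier times and their mean infection counts at each infectious age. -/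
open Finset
open scoped Classical ENNReal NNReal

/-!
Every `ω ∈ Ω_t` has an infector `σ ω` infected at some time `t - τ` with `τ > 0`. Grouping `Ω_t`
by infector, the group of `ω'` has exactly `n^{t - t^I(ω')}(ω')` members; grouping the infectors
by `τ` gives the double sum. The second identity is the first one rewritten with
`#C · E(X | C) = Σ_{ω ∈ C} X ω`.
-/

section

variable {Ω : Type*} [Fintype Ω]

theorem cnt_mul_expecC (C : Ω → Prop) (X : Ω → ℝ) :
    cnt C * expecC C X = ∑ ω ∈ univ.filter C, X ω := by
  unfold expecC
  by_cases hC : cnt C = 0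
  · have hempty : univ.filter C = ∅ := by
      simpa only [cnt, Nat.cast_eq_zero, card_eq_zero] using hC
    simp [hC, hempty]
  · exact mul_div_cancel₀ _ hC

theorem sum_genTimes_sum_filter_eq (tI : Ω → ℝ) (t : ℝ) (f : ℝ → Ω → ℝ) :
    ∑ τ ∈ genTimes tI t, ∑ ω ∈ univ.filter (fun ω => tI ω = t - τ), f τ ω =
      ∑ ω ∈ univ.filter (fun ω => tI ω < t), f (t - tI ω) ω := by
  rw [sum_comm' (t' := univ.filter fun ω => tI ω < t) (s' := fun ω => {t - tI ω})]
  · simp only [sum_singleton]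
  · intro τ ω
    simp only [genTimes, mem_filter, mem_image, mem_univ, true_and, mem_singleton]
    constructor
    · rintro ⟨⟨-, hτ⟩, hω⟩
      exact ⟨by linarith, by linarith⟩
    · rintro ⟨rfl, hω⟩
      exact ⟨⟨⟨ω, rfl⟩, by linarith⟩, by ring⟩

theorem ninf_sub_eq_cnt {tI : Ω → ℝ} {σ : Ω → Ω} {t : ℝ} (ht : ∀ ω, tI ω = t → 0 < tI ω)
    (ω' : Ω) : ninf tI σ (t - tI ω') ω' = cnt (fun ω => tI ω = t ∧ σ ω = ω') := by
  unfold ninf cnt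
  congr 2
  ext ω
  simp only [mem_filter, mem_univ, true_and]
  constructor
  · rintro ⟨-, rfl, h⟩
    exact ⟨by linarith, rfl⟩
  · rintro ⟨h, rfl⟩
    exact ⟨ht ω h, rfl, by linarith⟩

theorem cnt_eq_sum_cnt_infector {tI : Ω → ℝ} {σ : Ω → Ω}
    (hσ : ∀ ω, 0 < tI ω → tI (σ ω) < tI ω) {t : ℝ} (ht : ∀ ω, tI ω = t → 0 < tI ω) :
    cnt (fun ω => tI ω = t) =
      ∑ ω' ∈ univ.filter (fun ω' => tI ω' < t), cnt (fun ω => tI ω = t ∧ σ ω = ω') := by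
  unfold cnt
  rw [card_eq_sum_card_fiberwise (f := σ) (t := univ.filter fun ω' => tI ω' < t)]
  · simp only [filter_filter, Nat.cast_sum]
    congr! 4 -- the two sides differ only in their `Decidable` instances
  · intro ω hω
    simp only [coe_filter, mem_univ, true_and, Set.mem_ofPred_eq] at hω ⊢
    linarith [hσ ω (ht ω hω)]

end

/-- the number of newly infected individuals is determined by the
past.  Epidemic setting; if every individual infected at `t` has an infector
(`Ω_t ⊆ Ω_{>0}`, in particular `t > 0` whenever `Ω_t ≠ ∅`), then
`#Ω_t = Σ_{τ>0} Σ_{ω' ∈ Ω_{t−τ}} n^τ(ω')`, and equivalently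
`#Ω_t = Σ_{τ>0} #Ω_{t−τ} · E_{P_{t−τ}}(n^τ)`, the sums running over the finitely many
`τ > 0` with `Ω_{t−τ}` nonempty. -/
theorem statement_10 {Ω : Type*} [Fintype Ω] (tI : Ω → ℝ) (σ : Ω → Ω)
    (hσ : ∀ ω, 0 < tI ω → tI (σ ω) < tI ω) (t : ℝ)
    (ht : ∀ ω, tI ω = t → 0 < tI ω) :
    cnt (fun ω => tI ω = t) =
      ∑ τ ∈ genTimes tI t,
        ∑ ω' ∈ Finset.univ.filter (fun ω' => tI ω' = t - τ), ninf tI σ τ ω'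
    ∧
    cnt (fun ω => tI ω = t) =
      ∑ τ ∈ genTimes tI t,
        cnt (fun ω => tI ω = t - τ) *
          expecC (fun ω => tI ω = t - τ) (ninf tI σ τ) := by
  have hcount : cnt (fun ω => tI ω = t) =
      ∑ τ ∈ genTimes tI t,
        ∑ ω' ∈ univ.filter (fun ω' => tI ω' = t - τ), ninf tI σ τ ω' := by
    rw [sum_genTimes_sum_filter_eq tI t (ninf tI σ), cnt_eq_sum_cnt_infector hσ ht]
    exact sum_congr rfl fun ω' _ => (ninf_sub_eq_cnt ht ω').symm
  exact ⟨hcount, hcount.trans (sum_congr rfl fun τ _ => (cnt_mul_expecC _ _).symm)⟩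
end

section
/- In the epidemic setting with severity and testing, let t ∈ ℝ with Ω_t nonempty, and assume the suppression hypothesis holds at all times t' < t. Then for every ρ ∈ (−∞, +∞], P_t(τ̌^T_t = ρ) = Σ_g Σ_{τ > 0} P_{t−τ,g}(τ^T = ρ + τ) · ((1 − ξ_{t−τ}·1_{ρ ≤ 0})/(1 − ξ_{t−τ}·F^T_{t−τ,g}(τ))) · P_t(τ^σ_t = τ, Ĝ_t = g), where g ranges over the range of G, the sum over τ runs over the finitely many positive generation times with Ω_{t−τ,g} nonempty, and τ̌^T(ω) := τ^T(σ(ω)) − τ^σ(ω). -/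
open Finset
open scoped Classical ENNReal NNReal

noncomputable section

variable {Ω : Type*} [Fintype Ω]

/-- The (finitely many) positive times `τ` such that `Ω_{t-τ,g}` is nonempty. -/
def genTimesG (tI G : Ω → ℝ) (t g : ℝ) : Finset ℝ :=
  ((Finset.univ.filter (fun ω' => G ω' = g)).image (fun ω' => t - tI ω')).filter
    (fun τ => 0 < τ)

/-- `FT tI G τT t' g τ` is the improper CDF `F^T_{t',g}(τ) = P_{t',g}(τ^T ≤ τ)` of the
testing time of individuals infected at `t'` with severity `g`. -/
def FT (tI G : Ω → ℝ) (τT : Ω → ℝ≥0∞) (t' g τ : ℝ) : ℝ :=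
  prC (fun ω => tI ω = t' ∧ G ω = g) (fun ω => (τT ω : EReal) ≤ (τ : ℝ))

end

/-!
Split the infectees `ω ∈ Ω_t` according to the severity `g` and the generation time `τ` of
their infector; then `τ̌^T(ω) = ρ` says that the infector, who lies in `Ω_{t-τ,g}`, has
testing time `ρ + τ`. Counting such infectees through their infectors gives
`#Ω_{t-τ,g,ρ+τ} · E_{P_{t-τ,g}}(n^τ | τ^T = ρ + τ)`, and the suppression hypothesis turns
the conditional mean into `(1 - ξ·1_{ρ ≤ 0}) / (1 - ξ·F^T(τ)) · E_{P_{t-τ,g}}(n^τ)`. The same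
count without the testing constraint is `#Ω_{t-τ,g} · E_{P_{t-τ,g}}(n^τ)`, which is
`#Ω_t · P_t(τ^σ = τ, Ĝ = g)`.
-/

def SuppressionAt {Ω : Type*} [Fintype Ω] (tI : Ω → ℝ) (σ : Ω → Ω) (G : Ω → ℝ)
    (τT : Ω → ℝ≥0∞) (ξ : ℝ → ℝ) (t' : ℝ) : Prop :=
  ∀ g : ℝ, (Finset.univ.filter (fun ω => tI ω = t' ∧ G ω = g)).Nonempty →
    ∀ τ : ℝ, 0 < τ → ∀ ρ' : ℝ≥0∞,
      0 < prC (fun ω => tI ω = t' ∧ G ω = g) (fun ω => τT ω = ρ') →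
        0 < 1 - ξ t' * FT tI G τT t' g τ ∧
        expecC (fun ω => tI ω = t' ∧ G ω = g ∧ τT ω = ρ') (ninf tI σ τ) =
          ((1 - ξ t' * (if (ρ' : EReal) ≤ (τ : ℝ) then (1 : ℝ) else 0)) /
              (1 - ξ t' * FT tI G τT t' g τ)) *
            expecC (fun ω => tI ω = t' ∧ G ω = g) (ninf tI σ τ)

section Counting

variable {Ω : Type*} [Fintype Ω]

theorem cnt_congr {E F : Ω → Prop} (h : ∀ ω, E ω ↔ F ω) : cnt E = cnt F :=
  congrArg cnt (funext fun ω => propext (h ω))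

theorem cnt_eq_zero {E : Ω → Prop} (h : ∀ ω, ¬ E ω) : cnt E = 0 := by
  simp [cnt, h]

theorem cnt_nonneg (E : Ω → Prop) : 0 ≤ cnt E :=
  Nat.cast_nonneg _

theorem prC_nonneg (C E : Ω → Prop) : 0 ≤ prC C E :=
  div_nonneg (cnt_nonneg _) (cnt_nonneg _)

theorem cnt_pos {E : Ω → Prop} (h : ∃ ω, E ω) : 0 < cnt E := by
  obtain ⟨ω, hω⟩ := h
  rw [cnt]
  exact_mod_cast Finset.card_pos.2 ⟨ω, by simpa using hω⟩

theorem cnt_eq_sum_cnt_fiber {β : Type*} (f : Ω → β) (s : Finset β) {E : Ω → Prop}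
    (h : ∀ ω, E ω → f ω ∈ s) : cnt E = ∑ b ∈ s, cnt (fun ω => E ω ∧ f ω = b) := by
  rw [cnt, card_eq_sum_card_fiberwise (f := f) (t := s) fun ω hω => h ω (by simpa using hω)]
  push_cast
  refine sum_congr rfl fun b _ => ?_
  rw [filter_filter, cnt]
  congr

theorem sum_filter_eq_cnt_mul_expecC (C : Ω → Prop) [DecidablePred C] (X : Ω → ℝ) :
    ∑ ω ∈ univ.filter C, X ω = cnt C * expecC C X := by
  by_cases hC : cnt C = 0
  · have : univ.filter C = ∅ := Finset.card_eq_zero.1 (by simpa [cnt] using hC)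
    simp [this, hC]
  · rw [expecC, mul_div_cancel₀ _ hC]
    congr

theorem cnt_and_eq_prC_mul {C : Ω → Prop} (E : Ω → Prop) (hC : cnt C ≠ 0) :
    cnt (fun ω => C ω ∧ E ω) = prC C E * cnt C := by
  rw [prC, div_mul_cancel₀ _ hC]

end Counting

theorem EReal.sub_coe_eq_iff {x ρ : EReal} {τ : ℝ} : x - τ = ρ ↔ x = ρ + τ :=
  ⟨fun h => h ▸ EReal.sub_add_cancel.symm, fun h => h ▸ EReal.add_sub_cancel_right⟩

theorem EReal.add_coe_le_coe_iff {ρ : EReal} {τ : ℝ} : ρ + τ ≤ τ ↔ ρ ≤ 0 := by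
  nth_rewrite 2 [← zero_add (τ : EReal)]
  exact (EReal.addLECancellable_coe τ).add_le_add_iff_right

section Epidemic

variable {Ω : Type*} [Fintype Ω] (tI : Ω → ℝ) (σ : Ω → Ω) (G : Ω → ℝ)

theorem mem_genTimesG {t g τ : ℝ} :
    τ ∈ genTimesG tI G t g ↔
      (univ.filter fun ω => tI ω = t - τ ∧ G ω = g).Nonempty ∧ 0 < τ := by
  simp only [genTimesG, mem_filter, mem_image, mem_univ, true_and, Finset.Nonempty]
  exact and_congr_left' ⟨fun ⟨ω, hg, hτ⟩ => ⟨ω, by linarith, hg⟩,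
    fun ⟨ω, ht, hg⟩ => ⟨ω, hg, by linarith⟩⟩

theorem cnt_eq_sum_sum_cnt_severity_generation (hσ : ∀ ω, 0 < tI ω → tI (σ ω) < tI ω)
    {t : ℝ} {E : Ω → Prop} (hE : ∀ ω, E ω → tI ω = t ∧ 0 < tI ω) :
    cnt E = ∑ g ∈ univ.image G, ∑ τ ∈ genTimesG tI G t g,
      cnt (fun ω => E ω ∧ G (σ ω) = g ∧ tI ω - tI (σ ω) = τ) := by
  rw [cnt_eq_sum_cnt_fiber (G ∘ σ) (univ.image G) fun ω _ => mem_image_of_mem G (mem_univ _)]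
  refine sum_congr rfl fun g _ => ?_
  rw [cnt_eq_sum_cnt_fiber (fun ω => tI ω - tI (σ ω)) (genTimesG tI G t g) ?_]
  · exact sum_congr rfl fun τ _ => cnt_congr fun ω => and_assoc
  · rintro ω ⟨hEω, rfl⟩
    obtain ⟨rfl, hpos⟩ := hE ω hEω
    exact (mem_genTimesG tI G).2 ⟨⟨σ ω, by simp⟩, sub_pos.2 (hσ ω hpos)⟩

theorem cnt_infectees_eq_cnt_mul_expecC_ninf (t τ : ℝ) (Q : Ω → Prop) :
    cnt (fun ω => tI ω = t ∧ 0 < tI ω ∧ tI ω - tI (σ ω) = τ ∧ Q (σ ω)) =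
      cnt (fun ω => tI ω = t - τ ∧ Q ω) *
        expecC (fun ω => tI ω = t - τ ∧ Q ω) (ninf tI σ τ) := by
  rw [← sum_filter_eq_cnt_mul_expecC,
    cnt_eq_sum_cnt_fiber σ (univ.filter fun ω => tI ω = t - τ ∧ Q ω) ?_]
  · refine sum_congr rfl fun ω' hω' => cnt_congr fun ω => ?_
    rw [mem_filter] at hω'
    constructor
    · rintro ⟨⟨-, hpos, hτ, -⟩, rfl⟩
      exact ⟨hpos, rfl, hτ⟩
    · rintro ⟨hpos, rfl, hτ⟩
      exact ⟨⟨by linarith [hω'.2.1], hpos, hτ, hω'.2.2⟩, rfl⟩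
  · rintro ω ⟨rfl, -, hτ, hQ⟩
    exact mem_filter.2 ⟨mem_univ _, by linarith, hQ⟩

variable (τT : Ω → ℝ≥0∞) (ξ : ℝ → ℝ)

theorem cnt_infectees_of_tested_infector {t g τ : ℝ}
    (hsupp : SuppressionAt tI σ G τT ξ (t - τ)) (hτ : 0 < τ)
    (hC : (univ.filter fun ω => tI ω = t - τ ∧ G ω = g).Nonempty) (ρ' : ℝ≥0∞) :
    cnt (fun ω => tI ω = t ∧ 0 < tI ω ∧ tI ω - tI (σ ω) = τ ∧
        (G (σ ω) = g ∧ τT (σ ω) = ρ')) =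
      prC (fun ω => tI ω = t - τ ∧ G ω = g) (fun ω => τT ω = ρ') *
        ((1 - ξ (t - τ) * (if (ρ' : EReal) ≤ (τ : ℝ) then (1 : ℝ) else 0)) /
          (1 - ξ (t - τ) * FT tI G τT (t - τ) g τ)) *
        cnt (fun ω => tI ω = t ∧ 0 < tI ω ∧ tI ω - tI (σ ω) = τ ∧ G (σ ω) = g) := by
  have hCpos : 0 < cnt (fun ω => tI ω = t - τ ∧ G ω = g) := by
    obtain ⟨ω, hω⟩ := hC
    exact cnt_pos ⟨ω, (mem_filter.1 hω).2⟩
  have hD : cnt (fun ω => tI ω = t - τ ∧ G ω = g ∧ τT ω = ρ') =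
      prC (fun ω => tI ω = t - τ ∧ G ω = g) (fun ω => τT ω = ρ') *
        cnt (fun ω => tI ω = t - τ ∧ G ω = g) :=
    (cnt_congr fun ω => and_assoc.symm).trans (cnt_and_eq_prC_mul _ hCpos.ne')
  rw [cnt_infectees_eq_cnt_mul_expecC_ninf tI σ t τ (fun x => G x = g ∧ τT x = ρ'),
    cnt_infectees_eq_cnt_mul_expecC_ninf tI σ t τ (fun x => G x = g), hD]
  rcases (prC_nonneg (fun ω => tI ω = t - τ ∧ G ω = g) (fun ω => τT ω = ρ')).eq_or_lt
    with h0 | hpos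
  · rw [← h0]
    simp
  · rw [(hsupp g hC τ hτ ρ' hpos).2]
    ring

theorem cnt_infectees_shifted_eq {t g τ : ℝ}
    (hsupp : SuppressionAt tI σ G τT ξ (t - τ)) (hτ : 0 < τ)
    (hC : (univ.filter fun ω => tI ω = t - τ ∧ G ω = g).Nonempty) (ρ : EReal) :
    cnt (fun ω => (tI ω = t ∧ 0 < tI ω ∧
        (τT (σ ω) : EReal) - ((tI ω - tI (σ ω) : ℝ) : EReal) = ρ) ∧
          G (σ ω) = g ∧ tI ω - tI (σ ω) = τ) =
      prC (fun ω => tI ω = t - τ ∧ G ω = g) (fun ω => (τT ω : EReal) = ρ + (τ : ℝ)) *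
        ((1 - ξ (t - τ) * (if ρ ≤ (0 : EReal) then (1 : ℝ) else 0)) /
          (1 - ξ (t - τ) * FT tI G τT (t - τ) g τ)) *
        cnt (fun ω => tI ω = t ∧ 0 < tI ω ∧ tI ω - tI (σ ω) = τ ∧ G (σ ω) = g) := by
  have hshift : ∀ ω, ((tI ω = t ∧ 0 < tI ω ∧
      (τT (σ ω) : EReal) - ((tI ω - tI (σ ω) : ℝ) : EReal) = ρ) ∧
        G (σ ω) = g ∧ tI ω - tI (σ ω) = τ) ↔
      tI ω = t ∧ 0 < tI ω ∧ tI ω - tI (σ ω) = τ ∧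
        (G (σ ω) = g ∧ (τT (σ ω) : EReal) = ρ + (τ : ℝ)) := by
    intro ω
    constructor
    · rintro ⟨⟨ht, hpos, hρ⟩, hg, rfl⟩
      exact ⟨ht, hpos, rfl, hg, EReal.sub_coe_eq_iff.1 hρ⟩
    · rintro ⟨ht, hpos, rfl, hg, hρ⟩
      exact ⟨⟨ht, hpos, EReal.sub_coe_eq_iff.2 hρ⟩, hg, rfl⟩
  rw [cnt_congr hshift]
  by_cases hρ' : ∃ ρ' : ℝ≥0∞, (ρ' : EReal) = ρ + (τ : ℝ)
  · obtain ⟨ρ', hρ'⟩ := hρ'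
    have hev : ∀ x : ℝ≥0∞, (x : EReal) = ρ + (τ : ℝ) ↔ x = ρ' := fun x => by
      rw [← hρ', EReal.coe_ennreal_eq_coe_ennreal_iff]
    have hind : (ρ' : EReal) ≤ (τ : ℝ) ↔ ρ ≤ 0 := hρ' ▸ EReal.add_coe_le_coe_iff
    simp only [hev, ← hind]
    exact cnt_infectees_of_tested_infector tI σ G τT ξ hsupp hτ hC ρ'
  · simp only [not_exists] at hρ'
    rw [cnt_eq_zero fun ω h => hρ' _ h.2.2.2.2, prC, cnt_eq_zero fun ω h => hρ' _ h.2]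
    simp

end Epidemic

theorem statement_11_general {Ω : Type*} [Fintype Ω] (tI : Ω → ℝ) (σ : Ω → Ω)
    (hσ : ∀ ω, 0 < tI ω → tI (σ ω) < tI ω)
    (G : Ω → ℝ) (τT : Ω → ℝ≥0∞) (ξ : ℝ → ℝ)
    (t : ℝ)
    (hsup : ∀ t' : ℝ, t' < t → ∀ g : ℝ,
      (Finset.univ.filter (fun ω => tI ω = t' ∧ G ω = g)).Nonempty →
      ∀ τ : ℝ, 0 < τ → ∀ ρ' : ℝ≥0∞,
        0 < prC (fun ω => tI ω = t' ∧ G ω = g) (fun ω => τT ω = ρ') →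
          0 < 1 - ξ t' * FT tI G τT t' g τ ∧
          expecC (fun ω => tI ω = t' ∧ G ω = g ∧ τT ω = ρ') (ninf tI σ τ) =
            ((1 - ξ t' * (if (ρ' : EReal) ≤ (τ : ℝ) then (1 : ℝ) else 0)) /
                (1 - ξ t' * FT tI G τT t' g τ)) *
              expecC (fun ω => tI ω = t' ∧ G ω = g) (ninf tI σ τ)) :
    ∀ ρ : EReal, ρ ≠ ⊥ →
      prC (fun ω => tI ω = t)
          (fun ω => 0 < tI ω ∧ (τT (σ ω) : EReal) - ((tI ω - tI (σ ω) : ℝ) : EReal) = ρ) =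
        ∑ g ∈ Finset.univ.image G, ∑ τ ∈ genTimesG tI G t g,
          prC (fun ω => tI ω = t - τ ∧ G ω = g)
              (fun ω => (τT ω : EReal) = ρ + (τ : ℝ)) *
            ((1 - ξ (t - τ) * (if ρ ≤ (0 : EReal) then (1 : ℝ) else 0)) /
                (1 - ξ (t - τ) * FT tI G τT (t - τ) g τ)) *
            prC (fun ω => tI ω = t)
              (fun ω => 0 < tI ω ∧ tI ω - tI (σ ω) = τ ∧ G (σ ω) = g) := by
  intro ρ _
  rw [prC, cnt_eq_sum_sum_cnt_severity_generation tI σ G hσ fun ω h => ⟨h.1, h.2.1⟩, sum_div]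
  refine sum_congr rfl fun g _ => ?_
  rw [sum_div]
  refine sum_congr rfl fun τ hτ => ?_
  obtain ⟨hC, hτpos⟩ := (mem_genTimesG tI G).1 hτ
  rw [cnt_infectees_shifted_eq tI σ G τT ξ (hsup _ (by linarith)) hτpos hC, mul_div_assoc]
  rfl

/-- distribution of the infector's testing time, seen from the
infectee.  Epidemic setting with severity `G` and testing time `τ^T : Ω → [0,∞]`
(`+∞` if never tested, with the convention `+∞ − τ = +∞`, realized in `EReal`);
`τ̌^T(ω) := τ^T(σ ω) − τ^σ(ω)` on `Ω_{>0}`; `ξ : ℝ → [0,1]`.  Assuming the suppression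
hypothesis at all times `t' < t`, for every `ρ ∈ (−∞, +∞]`:
`P_t(τ̌^T_t = ρ) = Σ_g Σ_{τ>0} P_{t−τ,g}(τ^T = ρ+τ) · ((1 − ξ_{t−τ}·1_{ρ≤0})/(1 − ξ_{t−τ}·F^T_{t−τ,g}(τ))) · P_t(τ^σ_t = τ, Ĝ_t = g)`,
`g` ranging over the range of `G` and `τ` over the finitely many positive generation
times with `Ω_{t−τ,g}` nonempty. -/
theorem statement_11 {Ω : Type*} [Fintype Ω] (tI : Ω → ℝ) (σ : Ω → Ω)
    (hσ : ∀ ω, 0 < tI ω → tI (σ ω) < tI ω)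
    (G : Ω → ℝ) (τT : Ω → ℝ≥0∞) (ξ : ℝ → ℝ)
    (hξ : ∀ s : ℝ, 0 ≤ ξ s ∧ ξ s ≤ 1) (t : ℝ)
    (hne : (Finset.univ.filter (fun ω => tI ω = t)).Nonempty)
    (hsup : ∀ t' : ℝ, t' < t → ∀ g : ℝ,
      (Finset.univ.filter (fun ω => tI ω = t' ∧ G ω = g)).Nonempty →
      ∀ τ : ℝ, 0 < τ → ∀ ρ' : ℝ≥0∞,
        0 < prC (fun ω => tI ω = t' ∧ G ω = g) (fun ω => τT ω = ρ') →
          0 < 1 - ξ t' * FT tI G τT t' g τ ∧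
          expecC (fun ω => tI ω = t' ∧ G ω = g ∧ τT ω = ρ') (ninf tI σ τ) =
            ((1 - ξ t' * (if (ρ' : EReal) ≤ (τ : ℝ) then (1 : ℝ) else 0)) /
                (1 - ξ t' * FT tI G τT t' g τ)) *
              expecC (fun ω => tI ω = t' ∧ G ω = g) (ninf tI σ τ)) :
    ∀ ρ : EReal, ρ ≠ ⊥ →
      prC (fun ω => tI ω = t)
          (fun ω => 0 < tI ω ∧ (τT (σ ω) : EReal) - ((tI ω - tI (σ ω) : ℝ) : EReal) = ρ) =
        ∑ g ∈ Finset.univ.image G, ∑ τ ∈ genTimesG tI G t g,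
          prC (fun ω => tI ω = t - τ ∧ G ω = g)
              (fun ω => (τT ω : EReal) = ρ + (τ : ℝ)) *
            ((1 - ξ (t - τ) * (if ρ ≤ (0 : EReal) then (1 : ℝ) else 0)) /
                (1 - ξ (t - τ) * FT tI G τT (t - τ) g τ)) *
            prC (fun ω => tI ω = t)
              (fun ω => 0 < tI ω ∧ tI ω - tI (σ ω) = τ ∧ G (σ ω) = g) :=
  statement_11_general tI σ hσ G τT ξ t hsup
end
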